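/- If St is a descent statistic and π, π', σ, σ' are permutations with dom(π) ∩ dom(σ) = dom(π') ∩ dom(σ') = ∅, std(π) = std(π') and std(σ) = std(σ'), then the multiset St(π ⧢ σ) equals the multiset St(π' ⧢ σ'). -/

import Mathlib

/-- The descent set of a word: positions `i` (1-based) with `τ_i > τ_{i+1}`. -/
def Des (τ : List ℕ) : Finset ℕ :=
  (Finset.Ico 1 τ.length).filter (fun i => τ.getD i 0 < τ.getD (i-1) 0)

/-- The major index. -/
def maj (τ : List ℕ) : ℕ := ∑ i ∈ Des τ, i

/-- The descent number. -/
def des (τ : List ℕ) : ℕ := (Des τ).card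

/-- The ascent set. -/
def Asc (τ : List ℕ) : Finset ℕ :=
  (Finset.Ico 1 τ.length).filter (fun i => τ.getD (i-1) 0 < τ.getD i 0)

/-- The peak set: positions `i` (1-based, `2 ≤ i ≤ |τ|-1`) with `τ_{i-1} < τ_i > τ_{i+1}`. -/
def Pk (τ : List ℕ) : Finset ℕ :=
  (Finset.Ico 2 τ.length).filter
    (fun i => τ.getD (i-2) 0 < τ.getD (i-1) 0 ∧ τ.getD i 0 < τ.getD (i-1) 0)

/-- The valley set. -/
def Val (τ : List ℕ) : Finset ℕ :=
  (Finset.Ico 2 τ.length).filter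
    (fun i => τ.getD (i-1) 0 < τ.getD (i-2) 0 ∧ τ.getD (i-1) 0 < τ.getD i 0)

/-- The left peak set: peaks of `0τ`, recorded as positions of `τ`. -/
def Lpk (τ : List ℕ) : Finset ℕ := (Pk (0 :: τ)).image (· - 1)

/-- The right peak set: peaks of `τ0`. -/
def Rpk (τ : List ℕ) : Finset ℕ := Pk (τ ++ [0])

/-- The exterior peak set: peaks of `0τ0`, recorded as positions of `τ`. -/
def Epk (τ : List ℕ) : Finset ℕ := (Pk (0 :: (τ ++ [0]))).image (· - 1)

def pk (τ : List ℕ) : ℕ := (Pk τ).card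
def lpk (τ : List ℕ) : ℕ := (Lpk τ).card

/-- The number of updown runs (maximal monotone factors of `0τ`): for a nonempty
word with distinct letters this is one more than the number of interior
direction changes (peaks and valleys) of `0τ`. -/
def udr (τ : List ℕ) : ℕ :=
  if τ = [] then 0 else 1 + (Pk (0 :: τ) ∪ Val (0 :: τ)).card

/-- A permutation: a sequence of distinct positive integers. -/
def IsPerm (π : List ℕ) : Prop := π.Nodup ∧ ∀ x ∈ π, 0 < x

/-- The list of all shuffles (interleavings) of two words. -/
def shuffles : List ℕ → List ℕ → List (List ℕ)
  | [], σ => [σ]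
  | π, [] => [π]
  | a :: π, b :: σ =>
      ((shuffles π (b :: σ)).map (a :: ·)) ++ ((shuffles (a :: π) σ).map (b :: ·))
  termination_by π σ => π.length + σ.length

/-- A permutation statistic `St` is shuffle compatible if the multiset
distribution of `St` over the shuffles of `π` and `σ` depends only on
`St π`, `St σ` and the lengths. -/
def ShuffleCompatible {α : Type} (St : List ℕ → α) : Prop :=
  ∀ π π' σ σ' : List ℕ, IsPerm π → IsPerm π' → IsPerm σ → IsPerm σ' →
    π.length = π'.length → σ.length = σ'.length →
    π.Disjoint σ → π'.Disjoint σ' →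
    St π = St π' → St σ = St σ' →
    (((shuffles π σ).map St : List α) : Multiset α) = ((shuffles π' σ').map St : List α)

/-- A descent statistic: a statistic depending only on the descent set and length. -/
def IsDescentStat {α : Type} (St : List ℕ → α) : Prop :=
  ∀ π π' : List ℕ, IsPerm π → IsPerm π' → π.length = π'.length →
    Des π = Des π' → St π = St π'

/-- Standardization: replace each entry by its rank. -/
def std (π : List ℕ) : List ℕ := π.map (fun x => (π.filter (· ≤ x)).length)

lemma shuffles_nil_left (σ : List ℕ) : shuffles [] σ = [σ] := by rw [shuffles]

lemma shuffles_nil_right (π : List ℕ) : shuffles π [] = [π] := by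
  cases π <;> simp [shuffles]

lemma shuffles_cons_cons (a b : ℕ) (π σ : List ℕ) :
    shuffles (a :: π) (b :: σ) =
      ((shuffles π (b :: σ)).map (a :: ·)) ++ ((shuffles (a :: π) σ).map (b :: ·)) := by
  rw [shuffles]

inductive Interl : List ℕ → List ℕ → List ℕ → Prop
  | nil : Interl [] [] []
  | left {a : ℕ} {π σ τ : List ℕ} : Interl π σ τ → Interl (a :: π) σ (a :: τ)
  | right {b : ℕ} {π σ τ : List ℕ} : Interl π σ τ → Interl π (b :: σ) (b :: τ)

lemma Interl.nil_left : ∀ {σ τ : List ℕ}, Interl [] σ τ → τ = σ := by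
  intro σ τ h
  generalize hp : ([] : List ℕ) = π at h
  induction h with
  | nil => rfl
  | left h ih => simp at hp
  | right h ih => cases hp; simp [ih rfl]

lemma Interl.nil_right : ∀ {π τ : List ℕ}, Interl π [] τ → τ = π := by
  intro π τ h
  generalize hp : ([] : List ℕ) = σ at h
  induction h with
  | nil => rfl
  | left h ih => cases hp; simp [ih rfl]
  | right h ih => simp at hp

lemma Interl.self_left (σ : List ℕ) : Interl [] σ σ := by
  induction σ with
  | nil => exact .nil
  | cons b σ ih => exact .right ih

lemma Interl.self_right (π : List ℕ) : Interl π [] π := by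
  induction π with
  | nil => exact .nil
  | cons a π ih => exact .left ih

lemma Interl.mem_shuffles : ∀ {π σ τ : List ℕ}, Interl π σ τ → τ ∈ shuffles π σ := by
  intro π σ τ h
  induction h with
  | nil => simp [shuffles_nil_left]
  | @left a π σ τ h ih =>
      cases σ with
      | nil => rw [h.nil_right, shuffles_nil_right]; simp
      | cons b σ => rw [shuffles_cons_cons]; exact List.mem_append_left _ (List.mem_map_of_mem ih)
  | @right b π σ τ h ih =>
      cases π with
      | nil => rw [h.nil_left, shuffles_nil_left]; simp
      | cons a π => rw [shuffles_cons_cons]; exact List.mem_append_right _ (List.mem_map_of_mem ih)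

lemma interl_of_mem_shuffles : ∀ (π σ τ : List ℕ), τ ∈ shuffles π σ → Interl π σ τ := by
  intro π σ
  induction π, σ using shuffles.induct with
  | case1 s => intro τ hτ; rw [shuffles_nil_left] at hτ; simp at hτ; subst hτ; exact Interl.self_left _
  | case2 p h => intro τ hτ; rw [shuffles_nil_right] at hτ; simp at hτ; subst hτ; exact Interl.self_right _
  | case3 a π b σ ih1 ih2 =>
      intro τ hτ
      rw [shuffles_cons_cons] at hτ
      rcases List.mem_append.1 hτ with h | h <;> obtain ⟨u, hu, rfl⟩ := List.mem_map.1 h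
      · exact .left (ih1 u hu)
      · exact .right (ih2 u hu)

lemma mem_shuffles_iff {π σ τ : List ℕ} : τ ∈ shuffles π σ ↔ Interl π σ τ :=
  ⟨interl_of_mem_shuffles π σ τ, Interl.mem_shuffles⟩

lemma Interl.perm : ∀ {π σ τ : List ℕ}, Interl π σ τ → τ.Perm (π ++ σ) := by
  intro π σ τ h
  induction h with
  | nil => simp
  | left h ih => exact List.Perm.cons _ ih
  | right h ih => exact (List.Perm.cons _ ih).trans List.perm_middle.symm

lemma Interl.swap_sides : ∀ {π σ τ : List ℕ}, Interl π σ τ → Interl σ π τ := by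
  intro π σ τ h
  induction h with
  | nil => exact .nil
  | left h ih => exact .right ih
  | right h ih => exact .left ih

lemma shuffles_nodup : ∀ (π σ : List ℕ), π.Disjoint σ → (shuffles π σ).Nodup := by
  intro π σ
  induction π, σ using shuffles.induct with
  | case1 s => intro _; rw [shuffles_nil_left]; exact List.nodup_singleton _
  | case2 p h => intro _; rw [shuffles_nil_right]; exact List.nodup_singleton _
  | case3 a π b σ ih1 ih2 =>
      intro hd
      have hab : a ≠ b := fun h => hd (List.mem_cons_self (a := a) (l := π)) (by rw [h]; exact List.mem_cons_self (a := b) (l := σ))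
      rw [shuffles_cons_cons]
      apply List.Nodup.append
      · exact (ih1 (fun u hu hv => hd (List.mem_cons_of_mem _ hu) hv)).map
          (fun u v h => by injection h)
      · exact (ih2 (fun u hu hv => hd hu (List.mem_cons_of_mem _ hv))).map
          (fun u v h => by injection h)
      · intro t ht1 ht2
        obtain ⟨u, _, rfl⟩ := List.mem_map.1 ht1
        obtain ⟨v, _, hv⟩ := List.mem_map.1 ht2
        exact hab (by injection hv.symm)

lemma shuffles_map (f : ℕ → ℕ) : ∀ (π σ : List ℕ),
    shuffles (π.map f) (σ.map f) = (shuffles π σ).map (List.map f) := by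
  intro π σ
  induction π, σ using shuffles.induct with
  | case1 s => simp [shuffles_nil_left]
  | case2 p h => simp [shuffles_nil_right]
  | case3 a π b σ ih1 ih2 =>
      rw [List.map_cons, List.map_cons, shuffles_cons_cons, shuffles_cons_cons,
        ← List.map_cons (f := f) (a := b) (l := σ), ← List.map_cons (f := f) (a := a) (l := π), ih1, ih2]
      simp [List.map_map, Function.comp_def]

lemma Interl.exchange : ∀ {π σ : List ℕ} {x y : ℕ} (_ : x ∉ σ) (_ : y ∉ π) (A : List ℕ) {B : List ℕ},
    Interl π σ (A ++ x :: y :: B) → Interl π σ (A ++ y :: x :: B) := by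
  intro π σ x y hxσ hyπ A
  induction A generalizing π σ with
  | nil =>
      intro B h
      cases h with
      | left h1 =>
          rename_i π₁
          cases h1 with
          | left h2 => exact absurd (by simp : y ∈ x :: y :: _) hyπ
          | right h2 => exact .right (.left h2)
      | right h1 => exact absurd (List.mem_cons_self) hxσ
  | cons c A ih =>
      intro B h
      cases h with
      | left h1 => exact .left (ih (fun hx => hxσ hx) (fun hy => hyπ (List.mem_cons_of_mem _ hy)) h1)
      | right h1 => exact .right (ih (fun hx => hxσ (List.mem_cons_of_mem _ hx)) hyπ h1)

lemma countP_lt_countP {p q : ℕ → Bool} {l : List ℕ} (h : ∀ a ∈ l, p a → q a)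
    {a₀ : ℕ} (ha : a₀ ∈ l) (hq : q a₀) (hp : ¬ p a₀) : l.countP p < l.countP q := by
  induction l with
  | nil => simp at ha
  | cons b t ih =>
      rw [List.countP_cons, List.countP_cons]
      have hmono : t.countP p ≤ t.countP q :=
        List.countP_mono_left (fun x hx => h x (List.mem_cons_of_mem _ hx))
      rcases List.mem_cons.1 ha with heq | ha'
      · rw [← heq]
        have hpb : p a₀ = false := by simpa using hp
        simp [hpb, hq]; omega
      · have := ih (fun x hx => h x (List.mem_cons_of_mem _ hx)) ha'
        have hbq : (if p b then 1 else 0) ≤ (if q b then 1 else 0) := by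
          by_cases hb : p b = true
          · simp [hb, h b (List.mem_cons_self) hb]
          · simp [Bool.eq_false_iff.2 hb]
        omega

lemma getD_map_lt (f : ℕ → ℕ) (τ : List ℕ) {i : ℕ} (hi : i < τ.length) :
    (τ.map f).getD i 0 = f (τ.getD i 0) := by
  rw [List.getD_eq_getElem _ _ (by simpa using hi), List.getD_eq_getElem _ _ hi, List.getElem_map]

lemma getD_mem {τ : List ℕ} {i : ℕ} (hi : i < τ.length) : τ.getD i 0 ∈ τ := by
  rw [List.getD_eq_getElem _ _ hi]; exact List.getElem_mem _

/-- order iso from std equality, positionwise. -/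
lemma std_lt_iff {π : List ℕ} {i j : ℕ} (hi : i < π.length) (hj : j < π.length) :
    π[i] < π[j] ↔ (π.filter (· ≤ π[i])).length < (π.filter (· ≤ π[j])).length := by
  rw [← List.countP_eq_length_filter, ← List.countP_eq_length_filter]
  constructor
  · intro hlt
    exact countP_lt_countP (fun a _ hle => by simp at hle ⊢; omega)
      (List.getElem_mem hj) (by simp) (by simp; omega)
  · intro hlt
    by_contra hle
    have : π.countP (· ≤ π[j]) ≤ π.countP (· ≤ π[i]) :=
      List.countP_mono_left (fun a _ h => by simp at h ⊢; omega)
    omega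

lemma length_eq_of_std_eq {π π' : List ℕ} (h : std π = std π') : π.length = π'.length := by
  have := congrArg List.length h
  simpa [std] using this

lemma lt_iff_of_std_eq {π π' : List ℕ} (h : std π = std π') {i j : ℕ}
    (hi : i < π.length) (hj : j < π.length) :
    π[i] < π[j] ↔ π'[i]'(length_eq_of_std_eq h ▸ hi) < π'[j]'(length_eq_of_std_eq h ▸ hj) := by
  have hlen := length_eq_of_std_eq h
  have hi' : i < π'.length := hlen ▸ hi
  have hj' : j < π'.length := hlen ▸ hj
  have e1 : (π.filter (· ≤ π[i])).length = (π'.filter (· ≤ π'[i])).length := by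
    have h1 := List.getElem_of_eq h (show i < (std π).length by simpa [std] using hi)
    simpa [std, List.getElem_map] using h1
  have e2 : (π.filter (· ≤ π[j])).length = (π'.filter (· ≤ π'[j])).length := by
    have h1 := List.getElem_of_eq h (show j < (std π).length by simpa [std] using hj)
    simpa [std, List.getElem_map] using h1
  rw [std_lt_iff hi hj, e1, e2, ← std_lt_iff hi' hj']

lemma Des_map_eq {f : ℕ → ℕ} {τ : List ℕ}
    (h : ∀ i, 1 ≤ i → i < τ.length →
      (f (τ.getD i 0) < f (τ.getD (i-1) 0) ↔ τ.getD i 0 < τ.getD (i-1) 0)) :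
    Des (τ.map f) = Des τ := by
  unfold Des
  rw [List.length_map]
  apply Finset.filter_congr
  intro i hi
  rw [Finset.mem_Ico] at hi
  rw [getD_map_lt f τ hi.2, getD_map_lt f τ (by omega)]
  simpa using h i hi.1 hi.2

lemma swap_lt_iff {x y u v : ℕ} (hyx : y < x)
    (hu : ¬(y < u ∧ u < x)) (hv : ¬(y < v ∧ v < x))
    (h1 : ¬(u = x ∧ v = y)) (h2 : ¬(u = y ∧ v = x)) :
    Equiv.swap x y u < Equiv.swap x y v ↔ u < v := by
  rw [Equiv.swap_apply_def, Equiv.swap_apply_def]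
  split_ifs <;> omega

def AdjP (x y : ℕ) (τ : List ℕ) : Prop :=
  ∃ i, i + 1 < τ.length ∧
    ((τ.getD i 0 = x ∧ τ.getD (i+1) 0 = y) ∨ (τ.getD i 0 = y ∧ τ.getD (i+1) 0 = x))

lemma swap_closure {π σ : List ℕ} (hπ : IsPerm π) (hσ : IsPerm σ) (hd : π.Disjoint σ)
    {x y : ℕ} (hxπ : x ∈ π) (hyσ : y ∈ σ) {τ : List ℕ}
    (hτ : τ ∈ shuffles π σ) (hA : AdjP x y τ) :
    τ.map (Equiv.swap x y) ∈ shuffles π σ ∧ AdjP x y (τ.map (Equiv.swap x y)) := by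
  obtain ⟨i, hi, hp⟩ := hA
  have hxy : x ≠ y := fun h => hd hxπ (h ▸ hyσ)
  have hxσ : x ∉ σ := fun h => hd hxπ h
  have hyπ : y ∉ π := fun h => hd h hyσ
  have hND : (π ++ σ).Nodup := hπ.1.append hσ.1 hd
  have hperm : τ.Perm (π ++ σ) := (interl_of_mem_shuffles π σ τ hτ).perm
  have hτnd : τ.Nodup := hperm.nodup_iff.2 hND
  have hiu : i < τ.length := by omega
  set u := τ.getD i 0 with hu
  set v := τ.getD (i+1) 0 with hv
  have hdec : τ = τ.take i ++ u :: v :: τ.drop (i+2) := by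
    conv_lhs => rw [← List.take_append_drop i τ]
    rw [List.drop_eq_getElem_cons hiu, List.drop_eq_getElem_cons hi,
      hu, hv, List.getD_eq_getElem _ _ hiu, List.getD_eq_getElem _ _ hi]
  set A := τ.take i
  set B := τ.drop (i+2)
  have hndAB : (A ++ u :: v :: B).Nodup := hdec ▸ hτnd
  have hAne : ∀ z ∈ A, z ≠ u ∧ z ≠ v := by
    intro z hz
    have := List.disjoint_of_nodup_append hndAB hz
    simp at this
    exact ⟨this.1, this.2.1⟩
  have hBne : ∀ z ∈ B, z ≠ u ∧ z ≠ v := by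
    have h1 := (List.nodup_append.1 hndAB).2.1
    rw [List.nodup_cons, List.nodup_cons] at h1
    intro z hz
    exact ⟨fun h => h1.1 (by simp [h ▸ hz]), fun h => h1.2.1 (h ▸ hz)⟩
  have hswapu : Equiv.swap x y u = v ∧ Equiv.swap x y v = u := by
    rcases hp with ⟨h1, h2⟩ | ⟨h1, h2⟩ <;> rw [← hu, ← hv] at * <;> subst h1 h2 <;>
      simp [Equiv.swap_apply_left, Equiv.swap_apply_right]
  have hfix : ∀ z, z ≠ u → z ≠ v → Equiv.swap x y z = z := by
    intro z h1 h2
    rcases hp with ⟨e1, e2⟩ | ⟨e1, e2⟩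
    · exact Equiv.swap_apply_of_ne_of_ne (e1 ▸ h1) (e2 ▸ h2)
    · exact Equiv.swap_apply_of_ne_of_ne (e2 ▸ h2) (e1 ▸ h1)
  have hmapdec : τ.map (Equiv.swap x y) = A ++ v :: u :: B := by
    conv_lhs => rw [hdec]
    rw [List.map_append, List.map_cons, List.map_cons, hswapu.1, hswapu.2]
    congr 1
    · exact (List.map_congr_left (fun z hz => hfix z (hAne z hz).1 (hAne z hz).2)).trans
        (List.map_id' A)
    · congr 2
      exact (List.map_congr_left (fun z hz => hfix z (hBne z hz).1 (hBne z hz).2)).trans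
        (List.map_id' B)
  constructor
  · apply Interl.mem_shuffles
    rw [hmapdec]
    have hint : Interl π σ (A ++ u :: v :: B) := hdec ▸ interl_of_mem_shuffles π σ τ hτ
    rcases hp with ⟨e1, e2⟩ | ⟨e1, e2⟩
    · rw [e1, e2] at hint ⊢
      exact Interl.exchange hxσ hyπ A hint
    · rw [e1, e2] at hint ⊢
      exact (Interl.exchange hyπ hxσ A hint.swap_sides).swap_sides
  · refine ⟨i, by simpa using hi, ?_⟩
    rw [getD_map_lt _ _ hiu, getD_map_lt _ _ hi, ← hu, ← hv, hswapu.1, hswapu.2]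
    tauto

lemma des_swap_nonadj {π σ : List ℕ} {x y : ℕ} (hyx : y < x)
    (hadj : ∀ z, (z ∈ π ∨ z ∈ σ) → ¬(y < z ∧ z < x)) {τ : List ℕ}
    (hτ : τ ∈ shuffles π σ) (hnA : ¬ AdjP x y τ) :
    Des (τ.map (Equiv.swap x y)) = Des τ := by
  have hperm : τ.Perm (π ++ σ) := (interl_of_mem_shuffles π σ τ hτ).perm
  have hmem : ∀ z ∈ τ, z ∈ π ∨ z ∈ σ := by
    intro z hz
    have := hperm.mem_iff.1 hz
    simpa using this
  apply Des_map_eq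
  intro i h1 hlen
  apply swap_lt_iff hyx
  · exact hadj _ (hmem _ (getD_mem hlen))
  · exact hadj _ (hmem _ (getD_mem (by omega)))
  · rintro ⟨e1, e2⟩
    exact hnA ⟨i-1, by omega, Or.inr ⟨e2, by rw [show i-1+1 = i by omega]; exact e1⟩⟩
  · rintro ⟨e1, e2⟩
    exact hnA ⟨i-1, by omega, Or.inl ⟨e2, by rw [show i-1+1 = i by omega]; exact e1⟩⟩

lemma swap_step {π σ : List ℕ} (hπ : IsPerm π) (hσ : IsPerm σ) (hd : π.Disjoint σ)
    {x y : ℕ} (hxπ : x ∈ π) (hyσ : y ∈ σ) (hyx : y < x)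
    (hadj : ∀ z, (z ∈ π ∨ z ∈ σ) → ¬(y < z ∧ z < x)) :
    (((shuffles (π.map (Equiv.swap x y)) (σ.map (Equiv.swap x y))).map Des : List (Finset ℕ)) :
      Multiset (Finset ℕ)) = ((shuffles π σ).map Des : List (Finset ℕ)) := by
  classical
  rw [shuffles_map, List.map_map]
  rw [show ∀ l : List (List ℕ), ∀ f : List ℕ → Finset ℕ,
      ((l.map f : List (Finset ℕ)) : Multiset (Finset ℕ)) = Multiset.map f ↑l from
    fun l f => (Multiset.map_coe f l).symm, show ∀ l : List (List ℕ), ∀ f : List ℕ → Finset ℕ,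
      ((l.map f : List (Finset ℕ)) : Multiset (Finset ℕ)) = Multiset.map f ↑l from
    fun l f => (Multiset.map_coe f l).symm]
  set T : Multiset (List ℕ) := ↑(shuffles π σ) with hT
  have hTmem : ∀ τ ∈ T, τ ∈ shuffles π σ := fun τ hτ => by simpa [hT] using hτ
  have hTnd : T.Nodup := by
    rw [hT, Multiset.coe_nodup]; exact shuffles_nodup π σ hd
  rw [← Multiset.filter_add_not (AdjP x y) T, Multiset.map_add, Multiset.map_add]
  congr 1
  · have hinj : Function.Injective (List.map (Equiv.swap x y : ℕ → ℕ)) :=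
      List.map_injective_iff.2 (Equiv.swap x y).injective
    have hinv : ∀ l : List ℕ, (l.map (Equiv.swap x y)).map (Equiv.swap x y) = l := by
      intro l
      rw [List.map_map]
      simpa [Function.comp_def, Equiv.swap_apply_self] using List.map_id' l
    have hfix : (T.filter (AdjP x y)).map (List.map (Equiv.swap x y)) = T.filter (AdjP x y) := by
      apply (Multiset.Nodup.ext ((hTnd.filter _).map hinj) (hTnd.filter _)).2
      intro a
      constructor
      · intro ha
        obtain ⟨b, hb, rfl⟩ := Multiset.mem_map.1 ha
        rw [Multiset.mem_filter] at hb ⊢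
        have := swap_closure hπ hσ hd hxπ hyσ (hTmem b hb.1) hb.2
        exact ⟨by simpa [hT] using this.1, this.2⟩
      · intro ha
        rw [Multiset.mem_filter] at ha
        have := swap_closure hπ hσ hd hxπ hyσ (hTmem a ha.1) ha.2
        refine Multiset.mem_map.2 ⟨a.map (Equiv.swap x y), ?_, hinv a⟩
        rw [Multiset.mem_filter]
        exact ⟨by simpa [hT] using this.1, this.2⟩
    calc (T.filter (AdjP x y)).map (Des ∘ List.map (Equiv.swap x y))
        = ((T.filter (AdjP x y)).map (List.map (Equiv.swap x y))).map Des := by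
          rw [Multiset.map_map]
      _ = (T.filter (AdjP x y)).map Des := by rw [hfix]
  · apply Multiset.map_congr rfl
    intro τ hτ
    rw [Multiset.mem_filter] at hτ
    exact des_swap_nonadj hyx hadj (hTmem τ hτ.1) hτ.2

def cross (π σ : List ℕ) : ℕ := (π.map (fun a => σ.countP (· < a))).sum

lemma map_sum_lt {l : List ℕ} {f g : ℕ → ℕ} (h : ∀ a ∈ l, f a ≤ g a) {a₀ : ℕ}
    (ha : a₀ ∈ l) (hs : f a₀ < g a₀) : (l.map f).sum < (l.map g).sum := by
  induction l with
  | nil => simp at ha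
  | cons b t ih =>
      rw [List.map_cons, List.map_cons, List.sum_cons, List.sum_cons]
      rcases List.mem_cons.1 ha with heq | ha'
      · have h2 : (t.map f).sum ≤ (t.map g).sum :=
          List.sum_le_sum (fun a hx => h a (List.mem_cons_of_mem _ hx))
        have := heq ▸ hs
        omega
      · have h2 := ih (fun a hx => h a (List.mem_cons_of_mem _ hx)) ha'
        have h3 := h b (List.mem_cons_self)
        omega

lemma cross_eq_zero_iff {π σ : List ℕ} :
    cross π σ = 0 ↔ ∀ a ∈ π, ∀ b ∈ σ, ¬ b < a := by
  unfold cross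
  constructor
  · intro h a ha b hb hba
    have h1 : σ.countP (· < a) = 0 := by
      by_contra h2
      have h3 : 0 < (π.map (fun a => σ.countP (· < a))).sum := by
        have : σ.countP (· < a) ∈ π.map (fun a => σ.countP (· < a)) :=
          List.mem_map_of_mem ha
        exact lt_of_lt_of_le (Nat.pos_of_ne_zero h2) (List.single_le_sum (by simp) _ this)
      omega
    have := List.countP_eq_zero.1 h1 b hb
    simp at this
    omega
  · intro h
    apply List.sum_eq_zero
    intro z hz
    obtain ⟨a, ha, rfl⟩ := List.mem_map.1 hz
    apply List.countP_eq_zero.2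
    intro b hb
    simpa using h a ha b hb

lemma exists_adj_pair {π σ : List ℕ} (h : cross π σ ≠ 0) :
    ∃ x ∈ π, ∃ y ∈ σ, y < x ∧ ∀ z, (z ∈ π ∨ z ∈ σ) → ¬(y < z ∧ z < x) := by
  classical
  have h0 : ∃ a ∈ π, ∃ b ∈ σ, b < a := by
    by_contra hc
    push_neg at hc
    exact h (cross_eq_zero_iff.2 (fun a ha b hb => by have := hc a ha b hb; omega))
  obtain ⟨a, ha, b, hb, hba⟩ := h0
  set P : List (ℕ × ℕ) := (π ×ˢ σ).filter (fun p => p.2 < p.1) with hP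
  have hPmem : (a, b) ∈ P := by
    rw [hP, List.mem_filter]
    exact ⟨List.mem_product.2 ⟨ha, hb⟩, by simpa using hba⟩
  obtain ⟨m, hm⟩ : ∃ m, m ∈ P.argmin (fun p => p.1 - p.2) := by
    cases he : P.argmin (fun p => p.1 - p.2) with
    | none => exact absurd (List.argmin_eq_none.1 he ▸ hPmem) List.not_mem_nil
    | some m => exact ⟨m, by simp [he, Option.mem_def]⟩
  obtain ⟨m1, m2⟩ := m
  have hmP : (m1, m2) ∈ P := List.argmin_mem hm
  rw [hP, List.mem_filter] at hmP
  have hm1 : m1 ∈ π := (List.mem_product.1 hmP.1).1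
  have hm2 : m2 ∈ σ := (List.mem_product.1 hmP.1).2
  have hmlt : m2 < m1 := by simpa using hmP.2
  refine ⟨m1, hm1, m2, hm2, hmlt, ?_⟩
  rintro z hz ⟨h1, h2⟩
  rcases hz with hzπ | hzσ
  · have hzP : (z, m2) ∈ P := by
      rw [hP, List.mem_filter]
      exact ⟨List.mem_product.2 ⟨hzπ, hm2⟩, by simpa using h1⟩
    have := List.le_of_mem_argmin hzP hm
    simp only at this
    omega
  · have hzP : (m1, z) ∈ P := by
      rw [hP, List.mem_filter]
      exact ⟨List.mem_product.2 ⟨hm1, hzσ⟩, by simpa using h2⟩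
    have := List.le_of_mem_argmin hzP hm
    simp only at this
    omega

lemma cross_swap_lt {π σ : List ℕ} (hd : π.Disjoint σ)
    {x y : ℕ} (hxπ : x ∈ π) (hyσ : y ∈ σ) (hyx : y < x)
    (hadj : ∀ z, (z ∈ π ∨ z ∈ σ) → ¬(y < z ∧ z < x)) :
    cross (π.map (Equiv.swap x y)) (σ.map (Equiv.swap x y)) < cross π σ := by
  have hxσ : x ∉ σ := fun h => hd hxπ h
  have hyπ : y ∉ π := fun h => hd h hyσ
  unfold cross
  rw [List.map_map]
  have hrw : ∀ a : ℕ, ((σ.map (Equiv.swap x y)).countP (· < Equiv.swap x y a))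
      = σ.countP (fun b => Equiv.swap x y b < Equiv.swap x y a) := by
    intro a
    rw [List.countP_map]
    rfl
  apply map_sum_lt (f := fun a => (σ.map (Equiv.swap x y)).countP (· < Equiv.swap x y a))
    (g := fun a => σ.countP (· < a)) ?_ hxπ ?_
  · intro a ha
    rw [hrw]
    apply List.countP_mono_left
    intro b hb hlt
    simp only [decide_eq_true_eq] at hlt ⊢
    by_cases hax : a = x
    · subst hax
      by_cases hby : b = y
      · subst hby; rw [Equiv.swap_apply_left, Equiv.swap_apply_right] at hlt; omega
      · rw [Equiv.swap_apply_left] at hlt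
        rw [Equiv.swap_apply_of_ne_of_ne (fun h => hxσ (by rw [← h]; exact hb)) hby] at hlt
        have := hadj b (Or.inr hb)
        omega
    · have hay : a ≠ y := fun h => hyπ (h ▸ ha)
      rw [Equiv.swap_apply_of_ne_of_ne hax hay] at hlt
      by_cases hby : b = y
      · subst hby
        rw [Equiv.swap_apply_right] at hlt
        have := hadj a (Or.inl ha)
        omega
      · rwa [Equiv.swap_apply_of_ne_of_ne (fun h => hxσ (by rw [← h]; exact hb)) hby] at hlt
  · rw [hrw]
    apply countP_lt_countP (p := fun b => Equiv.swap x y b < Equiv.swap x y x)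
      (q := fun b => b < x) ?_ hyσ (by simpa using hyx) ?_
    · intro b hb hlt
      simp only [decide_eq_true_eq, Equiv.swap_apply_left] at hlt ⊢
      by_cases hby : b = y
      · subst hby; rw [Equiv.swap_apply_right] at hlt; omega
      · rw [Equiv.swap_apply_of_ne_of_ne (fun h => hxσ (by rw [← h]; exact hb)) hby] at hlt
        have := hadj b (Or.inr hb)
        omega
    · simp [Equiv.swap_apply_left, Equiv.swap_apply_right]
      omega

lemma swap_le_iff {x y u v : ℕ} (hyx : y < x)
    (hu : ¬(y < u ∧ u < x)) (hv : ¬(y < v ∧ v < x))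
    (h1 : ¬(u = x ∧ v = y)) (h2 : ¬(u = y ∧ v = x))
    (h3 : ¬(v = x ∧ u = y)) (h4 : ¬(v = y ∧ u = x)) :
    Equiv.swap x y u ≤ Equiv.swap x y v ↔ u ≤ v := by
  rw [Equiv.swap_apply_def, Equiv.swap_apply_def]
  split_ifs <;> omega

lemma std_map_eq_of_iso (f : ℕ → ℕ) (π : List ℕ)
    (h : ∀ u ∈ π, ∀ v ∈ π, (f u ≤ f v ↔ u ≤ v)) :
    std (π.map f) = std π := by
  unfold std
  rw [List.map_map]
  apply List.map_congr_left
  intro z hz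
  simp only [Function.comp_apply]
  rw [← List.countP_eq_length_filter, ← List.countP_eq_length_filter, List.countP_map]
  rw [List.countP_eq_length_filter, List.countP_eq_length_filter]
  apply congrArg
  apply List.filter_congr
  intro u hu
  simp only [Function.comp_apply, decide_eq_decide]
  exact h u hu z hz

lemma isPerm_map_swap {π : List ℕ} (hπ : IsPerm π) {x y : ℕ} (hx : 0 < x) (hy : 0 < y) :
    IsPerm (π.map (Equiv.swap x y)) := by
  refine ⟨hπ.1.map (Equiv.swap x y).injective, ?_⟩
  intro z hz
  obtain ⟨w, hw, rfl⟩ := List.mem_map.1 hz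
  by_cases h1 : w = x
  · simpa [h1, Equiv.swap_apply_left] using hy
  · by_cases h2 : w = y
    · simpa [h2, Equiv.swap_apply_right] using hx
    · rw [Equiv.swap_apply_of_ne_of_ne h1 h2]; exact hπ.2 w hw

lemma disjoint_map {π σ : List ℕ} (hd : π.Disjoint σ) {f : ℕ → ℕ}
    (hf : Function.Injective f) : (π.map f).Disjoint (σ.map f) := by
  intro a ha hb
  obtain ⟨u, hu, rfl⟩ := List.mem_map.1 ha
  obtain ⟨v, hv, he⟩ := List.mem_map.1 hb
  exact hd hu (hf he ▸ hv)

lemma base_case {π σ π' σ' : List ℕ} (hπ : IsPerm π) (hπ' : IsPerm π') (hσ : IsPerm σ)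
    (hσ' : IsPerm σ') (hd : π.Disjoint σ) (hd' : π'.Disjoint σ')
    (h1 : std π = std π') (h2 : std σ = std σ')
    (hc : cross π σ = 0) (hc' : cross π' σ' = 0) :
    (((shuffles π σ).map Des : List (Finset ℕ)) : Multiset (Finset ℕ)) =
      ((shuffles π' σ').map Des : List (Finset ℕ)) := by
  classical
  set h : ℕ → ℕ := fun z =>
    if z ∈ π then π'.getD (π.idxOf z) 0 else if z ∈ σ then σ'.getD (σ.idxOf z) 0 else z
    with hdef
  have hlenπ := length_eq_of_std_eq h1
  have hlenσ := length_eq_of_std_eq h2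
  have hπval : ∀ u ∈ π, h u = π'.getD (π.idxOf u) 0 := by
    intro u hu
    simp only [hdef, if_pos hu]
  have hσval : ∀ u ∈ σ, h u = σ'.getD (σ.idxOf u) 0 := by
    intro u hu
    have hnπ : u ∉ π := fun hp => hd hp hu
    simp only [hdef, if_neg hnπ, if_pos hu]
  have hmapπ : π.map h = π' := by
    apply List.ext_getElem (by simp [hlenπ])
    intro i hi1 hi2
    rw [List.getElem_map]
    have hi : i < π.length := by simpa using hi1
    rw [hπval _ (List.getElem_mem hi), List.Nodup.idxOf_getElem hπ.1 i hi,
      List.getD_eq_getElem _ _ (by omega)]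
  have hmapσ : σ.map h = σ' := by
    apply List.ext_getElem (by simp [hlenσ])
    intro i hi1 hi2
    rw [List.getElem_map]
    have hi : i < σ.length := by simpa using hi1
    rw [hσval _ (List.getElem_mem hi), List.Nodup.idxOf_getElem hσ.1 i hi,
      List.getD_eq_getElem _ _ (by omega)]
  have hmono : ∀ u, (u ∈ π ∨ u ∈ σ) → ∀ v, (v ∈ π ∨ v ∈ σ) → (u < v → h u < h v) := by
    have hcr := cross_eq_zero_iff.1 hc
    have hcr' := cross_eq_zero_iff.1 hc'
    intro u hu v hv huv
    rcases hu with hu | hu <;> rcases hv with hv | hv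
    · have hiu : π.idxOf u < π.length := List.idxOf_lt_length_iff.2 hu
      have hiv : π.idxOf v < π.length := List.idxOf_lt_length_iff.2 hv
      rw [hπval u hu, hπval v hv, List.getD_eq_getElem _ _ (by omega),
        List.getD_eq_getElem _ _ (by omega)]
      exact (lt_iff_of_std_eq h1 hiu hiv).1
        (by rwa [List.getElem_idxOf hiu, List.getElem_idxOf hiv])
    · -- u ∈ π, v ∈ σ
      have hu' : h u ∈ π' := by rw [← hmapπ]; exact List.mem_map_of_mem hu
      have hv' : h v ∈ σ' := by rw [← hmapσ]; exact List.mem_map_of_mem hv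
      have hne : h u ≠ h v := fun he => hd' hu' (he ▸ hv')
      have := hcr' (h u) hu' (h v) hv'
      omega
    · exact absurd huv (hcr v hv u hu)
    · have hiu : σ.idxOf u < σ.length := List.idxOf_lt_length_iff.2 hu
      have hiv : σ.idxOf v < σ.length := List.idxOf_lt_length_iff.2 hv
      rw [hσval u hu, hσval v hv, List.getD_eq_getElem _ _ (by omega),
        List.getD_eq_getElem _ _ (by omega)]
      exact (lt_iff_of_std_eq h2 hiu hiv).1
        (by rwa [List.getElem_idxOf hiu, List.getElem_idxOf hiv])
  have hiso : ∀ u, (u ∈ π ∨ u ∈ σ) → ∀ v, (v ∈ π ∨ v ∈ σ) → (h u < h v ↔ u < v) := by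
    intro u hu v hv
    constructor
    · intro hlt
      rcases lt_trichotomy u v with hc1 | hc1 | hc1
      · exact hc1
      · subst hc1; omega
      · exact absurd (hmono v hv u hu hc1) (by omega)
    · exact hmono u hu v hv
  have hshuf : shuffles π' σ' = (shuffles π σ).map (List.map h) := by
    rw [← hmapπ, ← hmapσ, shuffles_map]
  have hlist : (shuffles π' σ').map Des = (shuffles π σ).map Des := by
    rw [hshuf, List.map_map]
    apply List.map_congr_left
    intro τ hτ
    have hperm : τ.Perm (π ++ σ) := (interl_of_mem_shuffles π σ τ hτ).perm
    have hmemτ : ∀ z ∈ τ, z ∈ π ∨ z ∈ σ := by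
      intro z hz
      simpa using hperm.mem_iff.1 hz
    simp only [Function.comp_apply]
    apply Des_map_eq
    intro i hi1 hi2
    exact hiso _ (hmemτ _ (getD_mem hi2)) _ (hmemτ _ (getD_mem (by omega)))
  rw [hlist]

lemma main_des : ∀ (N : ℕ) (π σ π' σ' : List ℕ), cross π σ + cross π' σ' ≤ N →
    IsPerm π → IsPerm π' → IsPerm σ → IsPerm σ' → π.Disjoint σ → π'.Disjoint σ' →
    std π = std π' → std σ = std σ' →
    (((shuffles π σ).map Des : List (Finset ℕ)) : Multiset (Finset ℕ)) =
      ((shuffles π' σ').map Des : List (Finset ℕ)) := by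
  intro N
  induction N with
  | zero =>
      intro π σ π' σ' hN hπ hπ' hσ hσ' hd hd' h1 h2
      exact base_case hπ hπ' hσ hσ' hd hd' h1 h2 (by omega) (by omega)
  | succ n ih =>
      intro π σ π' σ' hN hπ hπ' hσ hσ' hd hd' h1 h2
      by_cases hc : cross π σ = 0
      · by_cases hc' : cross π' σ' = 0
        · exact base_case hπ hπ' hσ hσ' hd hd' h1 h2 hc hc'
        · obtain ⟨x, hxπ, y, hyσ, hyx, hadj⟩ := exists_adj_pair hc'
          have hx0 : 0 < x := hπ'.2 x hxπ
          have hy0 : 0 < y := hσ'.2 y hyσ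
          rw [← swap_step hπ' hσ' hd' hxπ hyσ hyx hadj]
          have hisoπ : ∀ u ∈ π', ∀ v ∈ π', (Equiv.swap x y u ≤ Equiv.swap x y v ↔ u ≤ v) := by
            intro u hu v hv
            apply swap_le_iff hyx (hadj u (Or.inl hu)) (hadj v (Or.inl hv))
            · rintro ⟨e1, e2⟩; exact hd' (e2 ▸ hv) hyσ
            · rintro ⟨e1, e2⟩; exact hd' (e1 ▸ hu) hyσ
            · rintro ⟨e1, e2⟩; exact hd' (e2 ▸ hu) hyσ
            · rintro ⟨e1, e2⟩; exact hd' (e1 ▸ hv) hyσ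
          have hisoσ : ∀ u ∈ σ', ∀ v ∈ σ', (Equiv.swap x y u ≤ Equiv.swap x y v ↔ u ≤ v) := by
            intro u hu v hv
            apply swap_le_iff hyx (hadj u (Or.inr hu)) (hadj v (Or.inr hv))
            · rintro ⟨e1, e2⟩; exact hd' hxπ (e1 ▸ hu)
            · rintro ⟨e1, e2⟩; exact hd' hxπ (e2 ▸ hv)
            · rintro ⟨e1, e2⟩; exact hd' hxπ (e1 ▸ hv)
            · rintro ⟨e1, e2⟩; exact hd' hxπ (e2 ▸ hu)
          apply ih
          · have := cross_swap_lt hd' hxπ hyσ hyx hadj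
            omega
          · exact hπ
          · exact isPerm_map_swap hπ' hx0 hy0
          · exact hσ
          · exact isPerm_map_swap hσ' hx0 hy0
          · exact hd
          · exact disjoint_map hd' (Equiv.swap x y).injective
          · rw [h1]
            exact (std_map_eq_of_iso _ _ hisoπ).symm
          · rw [h2]
            exact (std_map_eq_of_iso _ _ hisoσ).symm
      · obtain ⟨x, hxπ, y, hyσ, hyx, hadj⟩ := exists_adj_pair hc
        have hx0 : 0 < x := hπ.2 x hxπ
        have hy0 : 0 < y := hσ.2 y hyσ
        rw [← swap_step hπ hσ hd hxπ hyσ hyx hadj]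
        have hisoπ : ∀ u ∈ π, ∀ v ∈ π, (Equiv.swap x y u ≤ Equiv.swap x y v ↔ u ≤ v) := by
          intro u hu v hv
          apply swap_le_iff hyx (hadj u (Or.inl hu)) (hadj v (Or.inl hv))
          · rintro ⟨e1, e2⟩; exact hd (e2 ▸ hv) hyσ
          · rintro ⟨e1, e2⟩; exact hd (e1 ▸ hu) hyσ
          · rintro ⟨e1, e2⟩; exact hd (e2 ▸ hu) hyσ
          · rintro ⟨e1, e2⟩; exact hd (e1 ▸ hv) hyσ
        have hisoσ : ∀ u ∈ σ, ∀ v ∈ σ, (Equiv.swap x y u ≤ Equiv.swap x y v ↔ u ≤ v) := by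
          intro u hu v hv
          apply swap_le_iff hyx (hadj u (Or.inr hu)) (hadj v (Or.inr hv))
          · rintro ⟨e1, e2⟩; exact hd hxπ (e1 ▸ hu)
          · rintro ⟨e1, e2⟩; exact hd hxπ (e2 ▸ hv)
          · rintro ⟨e1, e2⟩; exact hd hxπ (e1 ▸ hv)
          · rintro ⟨e1, e2⟩; exact hd hxπ (e2 ▸ hu)
        apply ih
        · have := cross_swap_lt hd hxπ hyσ hyx hadj
          omega
        · exact isPerm_map_swap hπ hx0 hy0
        · exact hπ'
        · exact isPerm_map_swap hσ hx0 hy0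
        · exact hσ'
        · exact disjoint_map hd (Equiv.swap x y).injective
        · exact hd'
        · rw [← h1]
          exact std_map_eq_of_iso _ _ hisoπ
        · rw [← h2]
          exact std_map_eq_of_iso _ _ hisoσ

lemma shuffles_mem_isPerm {π σ : List ℕ} (hπ : IsPerm π) (hσ : IsPerm σ) (hd : π.Disjoint σ)
    {τ : List ℕ} (hτ : τ ∈ shuffles π σ) : IsPerm τ ∧ τ.length = π.length + σ.length := by
  have hperm : τ.Perm (π ++ σ) := (interl_of_mem_shuffles π σ τ hτ).perm
  refine ⟨⟨hperm.nodup_iff.2 (hπ.1.append hσ.1 hd), ?_⟩, by simpa using hperm.length_eq⟩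
  intro z hz
  rcases List.mem_append.1 (hperm.mem_iff.1 hz) with h | h
  · exact hπ.2 z h
  · exact hσ.2 z h

/-- If `St` is a descent statistic and the standardizations agree, then the
distributions of `St` over the two shuffle sets agree. -/
theorem stmt2 {α : Type} (St : List ℕ → α) (hSt : IsDescentStat St)
    (π π' σ σ' : List ℕ) (hπ : IsPerm π) (hπ' : IsPerm π') (hσ : IsPerm σ) (hσ' : IsPerm σ')
    (hd : π.Disjoint σ) (hd' : π'.Disjoint σ')
    (h1 : std π = std π') (h2 : std σ = std σ') :
    (((shuffles π σ).map St : List α) : Multiset α) = ((shuffles π' σ').map St : List α) := by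
  classical
  have hlenπ := length_eq_of_std_eq h1
  have hlenσ := length_eq_of_std_eq h2
  have hDes := main_des (cross π σ + cross π' σ') π σ π' σ' le_rfl hπ hπ' hσ hσ' hd hd' h1 h2
  set L₁ := shuffles π σ with hL1
  set L₂ := shuffles π' σ' with hL2
  have hall : ∀ τ ∈ L₁ ++ L₂, IsPerm τ ∧ τ.length = π.length + σ.length := by
    intro τ hτ
    rcases List.mem_append.1 hτ with h | h
    · exact shuffles_mem_isPerm hπ hσ hd h
    · rw [hlenπ, hlenσ]
      exact shuffles_mem_isPerm hπ' hσ' hd' h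
  set g : Finset ℕ → α := fun D =>
    if hex : ∃ τ, τ ∈ L₁ ++ L₂ ∧ Des τ = D then St hex.choose else St [] with hgdef
  have hg : ∀ τ ∈ L₁ ++ L₂, St τ = g (Des τ) := by
    intro τ hτ
    have hex : ∃ τ', τ' ∈ L₁ ++ L₂ ∧ Des τ' = Des τ := ⟨τ, hτ, rfl⟩
    simp only [hgdef, dif_pos hex]
    obtain ⟨hm, hdes⟩ := hex.choose_spec
    exact hSt τ hex.choose (hall τ hτ).1 (hall _ hm).1
      (by rw [(hall τ hτ).2, (hall _ hm).2]) hdes.symm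
  have e1 : L₁.map St = (L₁.map Des).map g := by
    rw [List.map_map]
    exact List.map_congr_left (fun τ hτ => hg τ (List.mem_append_left _ hτ))
  have e2 : L₂.map St = (L₂.map Des).map g := by
    rw [List.map_map]
    exact List.map_congr_left (fun τ hτ => hg τ (List.mem_append_right _ hτ))
  rw [e1, e2,
    show (((L₁.map Des).map g : List α) : Multiset α) = Multiset.map g ↑(L₁.map Des) from
      (Multiset.map_coe _ _).symm,
    show (((L₂.map Des).map g : List α) : Multiset α) = Multiset.map g ↑(L₂.map Des) from
      (Multiset.map_coe _ _).symm, hDes]
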